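/- (General Quantum Lovász Local Lemma) Let 𝔼 = E_1,…,E_n be a sequence of events in a finite-dimensional complex Hilbert space H, where E_i is defined by measurement M_i for each i, let ρ be a density operator on H, let Σ = (ρ; M_1,…,M_n) be the corresponding test, and let x_1,…,x_n ∈ (0,1]. For each 1 ≤ i ≤ n set s_i = max{ j < i : NInd_{Σ,𝔼}(i|j) } (with s_i = 0 if no such j exists), and assume Pr_Σ[E_i] ≤ x_i · ∏_{j=s_i+1}^{i−1}(1 − x_j) for all 1 ≤ i ≤ n, and that Pr_Σ[Ē_1,…,Ē_{i−1}] ≠ 0 for each 1 ≤ i ≤ n. Then Pr_Σ[Ē_1,…,Ē_n] ≥ ∏_{i=1}^{n}(1 − x_i). -/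

import Mathlib

open Matrix Finset
open scoped ComplexOrder

/-- A quantum measurement on `ℂ^d`: a finite family of operators indexed by the
outcomes in `spec`, satisfying the completeness condition `∑ Mₘ† Mₘ = I`. -/
structure Measurement (d : ℕ) where
  spec : Finset ℕ
  op : ℕ → Matrix (Fin d) (Fin d) ℂ
  complete : ∑ m ∈ spec, (op m)ᴴ * op m = 1

/-- An event `{M ∈ A}`: a measurement together with a subset of its spectrum. -/
structure QEvent (d : ℕ) where
  meas : Measurement d
  A : Finset ℕ
  sub : A ⊆ meas.spec

/-- The super-operator defined by an event: `ρ ↦ ∑_{m ∈ A} Mₘ ρ Mₘ†`. -/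
noncomputable def QEvent.superop {d : ℕ} (E : QEvent d) (ρ : Matrix (Fin d) (Fin d) ℂ) :
    Matrix (Fin d) (Fin d) ℂ :=
  ∑ m ∈ E.A, E.meas.op m * ρ * (E.meas.op m)ᴴ

/-- The probability of a sequence of events in state `ρ`:
`Pr_ρ[E₁,…,E_k] = tr(𝓔_k(⋯𝓔₁(ρ)⋯))`. -/
noncomputable def PrSeq {d : ℕ} (ρ : Matrix (Fin d) (Fin d) ℂ) (Es : List (QEvent d)) : ℝ :=
  (Matrix.trace (Es.foldl (fun σ E => E.superop σ) ρ)).re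

/-- A density operator: positive semidefinite with trace one. -/
def IsDensityOp {d : ℕ} (ρ : Matrix (Fin d) (Fin d) ℂ) : Prop :=
  ρ.PosSemidef ∧ ρ.trace = 1

/-- A projective measurement: every operator is an orthogonal projection and
distinct operators are orthogonal. -/
def Measurement.IsProjective {d : ℕ} (M : Measurement d) : Prop :=
  (∀ m ∈ M.spec, (M.op m)ᴴ = M.op m ∧ M.op m * M.op m = M.op m) ∧
  ∀ m ∈ M.spec, ∀ m' ∈ M.spec, m ≠ m' → M.op m * M.op m' = 0

/-- The complete event `I_M = {M ∈ spec(M)}`. -/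
def completeEvent {d : ℕ} (M : Measurement d) : QEvent d :=
  ⟨M, M.spec, subset_rfl⟩

/-- The complement `Ē = {M ∈ spec(M) \ A}` of the event `E = {M ∈ A}`. -/
def QEvent.compl {d : ℕ} (E : QEvent d) : QEvent d :=
  ⟨E.meas, E.meas.spec \ E.A, Finset.sdiff_subset⟩

/-- Conditional probability `Pr_ρ[𝔽|𝔼] = Pr_ρ[𝔼,𝔽] / Pr_ρ[𝔼]`. -/
noncomputable def condPrSeq {d : ℕ} (ρ : Matrix (Fin d) (Fin d) ℂ) (Fs Es : List (QEvent d)) : ℝ :=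
  PrSeq ρ (Es ++ Fs) / PrSeq ρ Es

/-- The list of events realizing `Pr_Σ[𝔼_K]` in the test `Σ = (ρ; M₁,…,M_n)`:
all measurements `M₁,…,M_{max K}` are performed; at the indices `i ∈ K` the event
`E i` is used, while at the remaining indices the complete event `I_{M_i}` is used. -/
noncomputable def testList {d : ℕ} (n : ℕ) (Ms : ℕ → Measurement d) (E : ℕ → QEvent d)
    (K : Finset ℕ) : List (QEvent d) :=
  ((List.range' 1 n).filter (fun i => decide (∃ k ∈ K, i ≤ k))).map
    (fun i => if i ∈ K then E i else completeEvent (Ms i))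

/-- The probability `Pr_Σ[𝔼_K]` of the subsequence of events indexed by `K` in the
test `Σ = (ρ; M₁,…,M_n)`. -/
noncomputable def PrTest {d : ℕ} (ρ : Matrix (Fin d) (Fin d) ℂ) (n : ℕ)
    (Ms : ℕ → Measurement d) (E : ℕ → QEvent d) (K : Finset ℕ) : ℝ :=
  PrSeq ρ (testList n Ms E K)

/-- The conditional probability `Pr_Σ[𝔼_L | 𝔼_K]` in a test (for `K < L`, the
concatenation `𝔼_K,𝔼_L` is the subsequence indexed by `K ∪ L`). -/
noncomputable def condPrTest {d : ℕ} (ρ : Matrix (Fin d) (Fin d) ℂ) (n : ℕ)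
    (Ms : ℕ → Measurement d) (E : ℕ → QEvent d) (L K : Finset ℕ) : ℝ :=
  PrTest ρ n Ms E (K ∪ L) / PrTest ρ n Ms E K

/-- Independence `Ind_Σ(E_i | 𝔼_J; 𝔼_{K∖J})`: `Pr_Σ[E_i|𝔼_K] = Pr_Σ[E_i|𝔼_{K∖J}]`. -/
def IndTest {d : ℕ} (ρ : Matrix (Fin d) (Fin d) ℂ) (n : ℕ)
    (Ms : ℕ → Measurement d) (E : ℕ → QEvent d) (i : ℕ) (J K : Finset ℕ) : Prop :=
  condPrTest ρ n Ms E {i} K = condPrTest ρ n Ms E {i} (K \ J)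

/-- Negative independence `NInd_Σ(E_i | 𝔼_K)`: `Pr_Σ[E_i | Ē_K] = Pr_Σ[E_i]`,
where in the conditioning sequence every event of `𝔼_K` is replaced by its complement. -/
def NIndTest {d : ℕ} (ρ : Matrix (Fin d) (Fin d) ℂ) (n : ℕ)
    (Ms : ℕ → Measurement d) (E : ℕ → QEvent d) (i : ℕ) (K : Finset ℕ) : Prop :=
  condPrTest ρ n Ms (Function.update (fun k => (E k).compl) i (E i)) {i} K
    = PrTest ρ n Ms E {i}

/-- `NInd_{Σ,𝔼}(k|l)`: `NInd_Σ(E_k | E₁,…,E_j)` for all `1 ≤ j ≤ l`. -/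
def NIndSeq {d : ℕ} (ρ : Matrix (Fin d) (Fin d) ℂ) (n : ℕ)
    (Ms : ℕ → Measurement d) (E : ℕ → QEvent d) (k l : ℕ) : Prop :=
  ∀ j, 1 ≤ j → j ≤ l → NIndTest ρ n Ms E k (Finset.Icc 1 j)

/-!
Write `P m = Pr[Ē₁,…,Ē_m]`. Since `Ē` and `E` together make up the complete event, which
preserves the trace, `P (m-1) - P m = Pr[Ē₁,…,Ē_{m-1}, E_m]`. Replacing `Ē_j` by the complete
event for `s_m < j < m` can only increase this probability, and negative independence (or
`s_m = 0`) factors the result as `Pr[E_m] · P s_m`. With the hypothesis on `Pr[E_m]` this gives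
`P (m-1) - P m ≤ x_m ∏_{s_m<j<m} (1 - x_j) · P s_m`, and induction on `m` turns this recursion
into `∏_{k<j≤m} (1 - x_j) · P k ≤ P m` for all `k ≤ m`; take `k = 0`, `m = n`.
-/

section

variable {d : ℕ}

namespace QEvent

lemma superop_posSemidef (E : QEvent d) {σ : Matrix (Fin d) (Fin d) ℂ} (hσ : σ.PosSemidef) :
    (E.superop σ).PosSemidef :=
  posSemidef_sum _ fun _ _ => hσ.mul_mul_conjTranspose_same _

lemma superop_add (E : QEvent d) (σ τ : Matrix (Fin d) (Fin d) ℂ) :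
    E.superop (σ + τ) = E.superop σ + E.superop τ := by
  simp only [superop, mul_add, add_mul, sum_add_distrib]

lemma compl_superop_add_superop (E : QEvent d) (σ : Matrix (Fin d) (Fin d) ℂ) :
    E.compl.superop σ + E.superop σ = (completeEvent E.meas).superop σ :=
  sum_sdiff E.sub

lemma trace_superop_completeEvent (M : Measurement d) (σ : Matrix (Fin d) (Fin d) ℂ) :
    ((completeEvent M).superop σ).trace = σ.trace := by
  calc ((completeEvent M).superop σ).trace
      = ∑ m ∈ M.spec, ((M.op m)ᴴ * M.op m * σ).trace := by
        simp only [superop, completeEvent, trace_sum]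
        exact sum_congr rfl fun m _ => trace_mul_cycle _ _ _
    _ = σ.trace := by rw [← trace_sum, ← sum_mul, M.complete, one_mul]

def IsSubevent (E E' : QEvent d) : Prop :=
  E.meas = E'.meas ∧ E.A ⊆ E'.A

lemma IsSubevent.superop_eq_add {E E' : QEvent d} (h : E.IsSubevent E')
    {σ : Matrix (Fin d) (Fin d) ℂ} (hσ : σ.PosSemidef) :
    ∃ τ : Matrix (Fin d) (Fin d) ℂ, τ.PosSemidef ∧ E'.superop σ = E.superop σ + τ := by
  refine ⟨∑ m ∈ E'.A \ E.A, E'.meas.op m * σ * (E'.meas.op m)ᴴ,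
    posSemidef_sum _ fun _ _ => hσ.mul_mul_conjTranspose_same _, ?_⟩
  rw [superop, superop, h.1, add_comm, sum_sdiff h.2]

lemma compl_isSubevent_completeEvent (E : QEvent d) : E.compl.IsSubevent (completeEvent E.meas) :=
  ⟨rfl, sdiff_subset⟩

end QEvent

open QEvent

lemma PrSeq_nil (ρ : Matrix (Fin d) (Fin d) ℂ) : PrSeq ρ [] = ρ.trace.re := rfl

lemma PrSeq_cons (ρ : Matrix (Fin d) (Fin d) ℂ) (E : QEvent d) (l : List (QEvent d)) :
    PrSeq ρ (E :: l) = PrSeq (E.superop ρ) l := rfl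

lemma PrSeq_append (ρ : Matrix (Fin d) (Fin d) ℂ) (l l' : List (QEvent d)) :
    PrSeq ρ (l ++ l') = PrSeq (l.foldl (fun σ E => E.superop σ) ρ) l' := by
  simp only [PrSeq, List.foldl_append]

lemma PrSeq_add (σ τ : Matrix (Fin d) (Fin d) ℂ) (l : List (QEvent d)) :
    PrSeq (σ + τ) l = PrSeq σ l + PrSeq τ l := by
  induction l generalizing σ τ with
  | nil => simp [PrSeq_nil, trace_add]
  | cons E l ih => rw [PrSeq_cons, PrSeq_cons, PrSeq_cons, superop_add, ih]

lemma PrSeq_nonneg {σ : Matrix (Fin d) (Fin d) ℂ} (hσ : σ.PosSemidef) (l : List (QEvent d)) :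
    0 ≤ PrSeq σ l := by
  induction l generalizing σ with
  | nil => exact (Complex.nonneg_iff.mp hσ.trace_nonneg).1
  | cons E l ih => exact ih (E.superop_posSemidef hσ)

lemma PrSeq_mono {σ : Matrix (Fin d) (Fin d) ℂ} (hσ : σ.PosSemidef) {l l' : List (QEvent d)}
    (h : List.Forall₂ IsSubevent l l') : PrSeq σ l ≤ PrSeq σ l' := by
  induction h generalizing σ with
  | nil => rfl
  | @cons E E' l l' hE _ ih =>
    obtain ⟨τ, hτ, hE'⟩ := hE.superop_eq_add hσ
    rw [PrSeq_cons, PrSeq_cons, hE', PrSeq_add]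
    linarith [ih (E.superop_posSemidef hσ), PrSeq_nonneg hτ l']

lemma PrSeq_append_compl (ρ : Matrix (Fin d) (Fin d) ℂ) (l : List (QEvent d)) (E : QEvent d) :
    PrSeq ρ (l ++ [E.compl]) = PrSeq ρ l - PrSeq ρ (l ++ [E]) := by
  rw [PrSeq_append, PrSeq_append, eq_sub_iff_add_eq, PrSeq_cons, PrSeq_cons, PrSeq_nil,
    PrSeq_nil, ← Complex.add_re, ← trace_add, compl_superop_add_superop,
    trace_superop_completeEvent]
  rfl

section Test

variable (ρ : Matrix (Fin d) (Fin d) ℂ) (n : ℕ) (Ms : ℕ → Measurement d)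

lemma testList_eq_map (G : ℕ → QEvent d) {K : Finset ℕ} {M : ℕ} (hM : M ∈ K)
    (hK : ∀ k ∈ K, k ≤ M) (hMn : M ≤ n) :
    testList n Ms G K =
      (List.range' 1 M).map (fun i => if i ∈ K then G i else completeEvent (Ms i)) := by
  have hsplit : List.range' 1 n = List.range' 1 M ++ List.range' (1 + M) (n - M) := by
    simp [Nat.add_sub_of_le hMn]
  rw [testList, hsplit, List.filter_append, List.filter_eq_self.mpr, List.filter_eq_nil_iff.mpr,
    List.append_nil]
  · intro i hi
    simp only [List.mem_range'_1, decide_eq_true_eq, not_exists, not_and] at hi ⊢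
    intro k hk
    linarith [hK k hk]
  · intro i hi
    simp only [List.mem_range'_1, decide_eq_true_eq] at hi ⊢
    exact ⟨M, hM, by omega⟩

lemma PrTest_congr {G G' : ℕ → QEvent d} {K : Finset ℕ} (h : ∀ k ∈ K, G k = G' k) :
    PrTest ρ n Ms G K = PrTest ρ n Ms G' K := by
  unfold PrTest testList
  congr 2
  funext i
  split_ifs with hi
  exacts [h i hi, rfl]

lemma PrTest_Icc (G : ℕ → QEvent d) {m : ℕ} (hm : m ≤ n) :
    PrTest ρ n Ms G (Icc 1 m) = PrSeq ρ ((List.range' 1 m).map G) := by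
  rcases Nat.eq_zero_or_pos m with rfl | hm0
  · simp [PrTest, testList]
  rw [PrTest, testList_eq_map n Ms G (by simp; omega) (fun k hk => (mem_Icc.mp hk).2) hm]
  congr 1
  refine List.map_congr_left fun i hi => ?_
  rw [List.mem_range'_1] at hi
  rw [if_pos (mem_Icc.mpr ⟨hi.1, by omega⟩)]

lemma PrTest_nonneg (hρ : ρ.PosSemidef) (G : ℕ → QEvent d) (K : Finset ℕ) :
    0 ≤ PrTest ρ n Ms G K :=
  PrSeq_nonneg hρ _

end Test

lemma prod_one_sub_mul_le_of_sub_le {n : ℕ} {P x : ℕ → ℝ} {s : ℕ → ℕ}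
    (hx : ∀ i ∈ Icc 1 n, x i ∈ Set.Icc (0 : ℝ) 1) (hs : ∀ m < n, s (m + 1) ≤ m)
    (hdec : ∀ m < n, P m - P (m + 1) ≤
      x (m + 1) * (∏ j ∈ Ioo (s (m + 1)) (m + 1), (1 - x j)) * P (s (m + 1))) :
    ∀ m ≤ n, ∀ k ≤ m, (∏ j ∈ Ioc k m, (1 - x j)) * P k ≤ P m := by
  intro m
  induction m with
  | zero => intro _ k hk; simp [Nat.le_zero.mp hk]
  | succ m ih =>
    intro hm k hk
    obtain ⟨hx0, hx1⟩ := hx (m + 1) (by simp; omega)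
    rcases hk.eq_or_lt with rfl | hk
    · simp
    have hstep : (1 - x (m + 1)) * P m ≤ P (m + 1) := by
      have hsm := ih (by omega) _ (hs m hm)
      have h := hdec m hm
      rw [Ioo_add_one_right_eq_Ioc] at h
      linarith [mul_le_mul_of_nonneg_left hsm hx0]
    calc (∏ j ∈ Ioc k (m + 1), (1 - x j)) * P k
        = (1 - x (m + 1)) * ((∏ j ∈ Ioc k m, (1 - x j)) * P k) := by
          rw [prod_Ioc_succ_top (by omega)]; ring
      _ ≤ (1 - x (m + 1)) * P m :=
          mul_le_mul_of_nonneg_left (ih (by omega) k (by omega)) (by linarith)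
      _ ≤ P (m + 1) := hstep

lemma Nat.sSup_eq_zero_or_mem (S : Set ℕ) : sSup S = 0 ∨ sSup S ∈ S := by
  by_cases hS : BddAbove S
  · rcases S.eq_empty_or_nonempty with rfl | hne
    · exact Or.inl csSup_empty
    · exact Or.inr (Nat.sSup_mem hne hS)
  · exact Or.inl (Nat.sSup_of_not_bddAbove hS)

section LLL

variable {ρ : Matrix (Fin d) (Fin d) ℂ} {n : ℕ} {Ms : ℕ → Measurement d}
  {E : ℕ → QEvent d}

lemma PrTest_compl_Icc_sub_Icc_succ {m : ℕ} (hm : m < n) :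
    PrTest ρ n Ms (fun k => (E k).compl) (Icc 1 m) -
        PrTest ρ n Ms (fun k => (E k).compl) (Icc 1 (m + 1)) =
      PrTest ρ n Ms (Function.update (fun k => (E k).compl) (m + 1) (E (m + 1)))
        (Icc 1 (m + 1)) := by
  have hprefix :
      (List.range' 1 m).map (Function.update (fun k => (E k).compl) (m + 1) (E (m + 1))) =
        (List.range' 1 m).map (fun k => (E k).compl) :=
    List.map_congr_left fun i hi =>
      Function.update_of_ne (by rw [List.mem_range'_1] at hi; omega) _ _
  rw [PrTest_Icc _ _ _ _ hm.le, PrTest_Icc _ _ _ _ hm, PrTest_Icc _ _ _ _ hm, List.range'_concat,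
    one_mul, add_comm 1 m, List.map_append, List.map_append, hprefix, List.map_singleton,
    List.map_singleton, Function.update_self, PrSeq_append_compl, sub_sub_cancel]

lemma PrTest_update_le_union (hρ : ρ.PosSemidef) (hE : ∀ k ∈ Icc 1 n, (E k).meas = Ms k)
    {t i : ℕ} (hti : t < i) (hin : i ≤ n) :
    PrTest ρ n Ms (Function.update (fun k => (E k).compl) i (E i)) (Icc 1 i) ≤
      PrTest ρ n Ms (Function.update (fun k => (E k).compl) i (E i)) (Icc 1 t ∪ {i}) := by
  set G := Function.update (fun k => (E k).compl) i (E i)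
  rw [PrTest, PrTest,
    testList_eq_map n Ms G (by simp; omega) (fun k hk => (mem_Icc.mp hk).2) hin,
    testList_eq_map n Ms G (by simp) (fun k hk => by simp at hk; omega) hin]
  refine PrSeq_mono hρ (List.forall₂_map_left_iff.mpr (List.forall₂_map_right_iff.mpr
    (List.forall₂_same.mpr fun j hj => ?_)))
  rw [List.mem_range'_1] at hj
  rw [if_pos (mem_Icc.mpr ⟨hj.1, by omega⟩)]
  split_ifs with hjK
  · exact ⟨rfl, subset_rfl⟩
  · have hji : j ≠ i := by rintro rfl; simp at hjK
    rw [show G j = (E j).compl from Function.update_of_ne hji _ _,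
      ← hE j (mem_Icc.mpr ⟨hj.1, by omega⟩)]
    exact (E j).compl_isSubevent_completeEvent

lemma PrTest_update_union_eq (hρ : IsDensityOp ρ) {t i : ℕ} (hti : t < i)
    (hind : t = 0 ∨ NIndTest ρ n Ms E i (Icc 1 t))
    (hne : PrTest ρ n Ms (fun k => (E k).compl) (Icc 1 t) ≠ 0) :
    PrTest ρ n Ms (Function.update (fun k => (E k).compl) i (E i)) (Icc 1 t ∪ {i}) =
      PrTest ρ n Ms E {i} * PrTest ρ n Ms (fun k => (E k).compl) (Icc 1 t) := by
  rcases hind with rfl | hind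
  · rw [PrTest_Icc _ _ _ _ (Nat.zero_le n), List.range'_zero, List.map_nil, PrSeq_nil, hρ.2,
      Complex.one_re, Icc_eq_empty (by omega), empty_union, mul_one]
    exact PrTest_congr _ _ _ fun k hk => by simp only [mem_singleton.mp hk, Function.update_self]
  · rw [NIndTest, condPrTest, PrTest_congr ρ n Ms (K := Icc 1 t) (G' := fun k => (E k).compl)
      (fun k hk => Function.update_of_ne (by simp at hk; omega) _ _)] at hind
    rw [← hind, div_mul_cancel₀ _ hne]

end LLL

end

/-- General Quantum Lovász Local Lemma: with
`s_i = max{ j < i : NInd_{Σ,𝔼}(i|j) }` (`s_i = 0` if no such `j` exists, realized via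
`sSup` on `ℕ`), if `Pr_Σ[E_i] ≤ x_i · ∏_{j=s_i+1}^{i−1}(1 − x_j)` for all `1 ≤ i ≤ n`
and `Pr_Σ[Ē₁,…,Ē_{i−1}] ≠ 0` for each `1 ≤ i ≤ n`, then
`Pr_Σ[Ē₁,…,Ē_n] ≥ ∏_{i=1}^{n}(1 − x_i)`. -/
theorem general_quantum_lll {d : ℕ} (ρ : Matrix (Fin d) (Fin d) ℂ) (hρ : IsDensityOp ρ)
    (n : ℕ) (Ms : ℕ → Measurement d) (E : ℕ → QEvent d)
    (hE : ∀ k ∈ Finset.Icc 1 n, (E k).meas = Ms k)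
    (x : ℕ → ℝ) (hx : ∀ i ∈ Finset.Icc 1 n, x i ∈ Set.Ioc (0 : ℝ) 1)
    (s : ℕ → ℕ)
    (hs : ∀ i ∈ Finset.Icc 1 n,
      s i = sSup {j : ℕ | 0 < j ∧ j < i ∧ NIndSeq ρ n Ms E i j})
    (hbound : ∀ i ∈ Finset.Icc 1 n,
      PrTest ρ n Ms E {i} ≤ x i * ∏ j ∈ Finset.Ioo (s i) i, (1 - x j))
    (hne : ∀ i ∈ Finset.Icc 1 n,
      PrTest ρ n Ms (fun k => (E k).compl) (Finset.Ico 1 i) ≠ 0) :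
    PrTest ρ n Ms (fun k => (E k).compl) (Finset.Icc 1 n)
      ≥ ∏ i ∈ Finset.Icc 1 n, (1 - x i) := by
  set P : ℕ → ℝ := fun m => PrTest ρ n Ms (fun k => (E k).compl) (Icc 1 m)
  have hs_spec : ∀ m < n,
      s (m + 1) ≤ m ∧ (s (m + 1) = 0 ∨ NIndTest ρ n Ms E (m + 1) (Icc 1 (s (m + 1)))) := by
    intro m hm
    rw [hs (m + 1) (by simp; omega)]
    rcases Nat.sSup_eq_zero_or_mem {j | 0 < j ∧ j < m + 1 ∧ NIndSeq ρ n Ms E (m + 1) j}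
      with h | h
    · exact ⟨by omega, Or.inl h⟩
    · exact ⟨Nat.lt_succ_iff.mp h.2.1, Or.inr (h.2.2 _ h.1 le_rfl)⟩
  have hdec : ∀ m < n, P m - P (m + 1) ≤
      x (m + 1) * (∏ j ∈ Ioo (s (m + 1)) (m + 1), (1 - x j)) * P (s (m + 1)) := by
    intro m hm
    obtain ⟨hsm, hind⟩ := hs_spec m hm
    calc P m - P (m + 1)
        ≤ PrTest ρ n Ms (Function.update (fun k => (E k).compl) (m + 1) (E (m + 1)))
            (Icc 1 (s (m + 1)) ∪ {m + 1}) :=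
          (PrTest_compl_Icc_sub_Icc_succ hm).trans_le
            (PrTest_update_le_union hρ.1 hE (by omega) hm)
      _ = PrTest ρ n Ms E {m + 1} * P (s (m + 1)) :=
          PrTest_update_union_eq hρ (by omega) hind (hne _ (by simp; omega))
      _ ≤ _ := mul_le_mul_of_nonneg_right (hbound _ (by simp; omega))
          (PrTest_nonneg _ _ _ hρ.1 _ _)
  have hP0 : P 0 = 1 := by
    simp only [P, PrTest_Icc _ _ _ _ (Nat.zero_le n), List.range'_zero, List.map_nil, PrSeq_nil,
      hρ.2, Complex.one_re]
  have := prod_one_sub_mul_le_of_sub_le (fun i hi => Set.Ioc_subset_Icc_self (hx i hi))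
    (fun m hm => (hs_spec m hm).1) hdec n le_rfl 0 (Nat.zero_le n)
  rwa [hP0, mul_one, ← Icc_add_one_left_eq_Ioc] at this
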